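/- arXiv:2306.00705 — 5 statements merged into one kernel-verified Lean document; each statement's English description precedes it below -/
import Mathlib

section
/- Let d ≥ 1 and for each i = 1,…,d let A_i ∈ ℂ^{n_i×n_i}, C_i ∈ ℂ^{n_i×b_i}, and let ξ⃗_i = (ξ_{i,0},…,ξ_{i,k_i−1}) be poles in ℂ∪{∞} none of which is an eigenvalue of A_i; set Q_i(z) := ∏_{ξ∈ξ⃗_i, ξ≠∞}(z−ξ). Let W be the set of Kronecker products w_1⊗w_2⊗⋯⊗w_d with w_i ∈ 𝒬_{k_i}(A_i,C_i,ξ⃗_i) for each i, and define the tensorized block rational Krylov subspace 𝒬⊗ as the set of all finite sums Σ_{j=1}^s v_j Γ_j with v_j ∈ W and Γ_j ∈ ℂ^{(b_1⋯b_d)×(b_1⋯b_d)}. Then 𝒬⊗ = { (Q_1(A_1)^{-1}⊗⋯⊗Q_d(A_d)^{-1}) · (P(A_1,…,A_d)∘(C_1,…,C_d)) : P a multivariate matrix polynomial with coefficients in ℂ^{(b_1⋯b_d)×(b_1⋯b_d)} of degree at most k_i − 1 in the variable x_i for each i }. -/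
open Matrix Polynomial

/-- `Q(z) = ∏_{ξⱼ ≠ ∞} (z - ξⱼ)`, poles encoded as `Option ℂ` with `none = ∞`. -/
noncomputable def Qpoly {k : ℕ} (ξ : Fin k → Option ℂ) : Polynomial ℂ :=
  ∏ j, (ξ j).elim (1 : Polynomial ℂ) (fun z => X - C z)

/-- The block rational Krylov subspace `𝒬ₖ(A, v, ξ)`:
all matrices `Q(A)⁻¹ ⬝ Σ_{i<k} Aⁱ v Γᵢ` with `Γᵢ ∈ ℂ^{b×b}`. -/
noncomputable def ratKrylov {n b k : ℕ} (A : Matrix (Fin n) (Fin n) ℂ)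
    (v : Matrix (Fin n) (Fin b) ℂ) (ξ : Fin k → Option ℂ) :
    Set (Matrix (Fin n) (Fin b) ℂ) :=
  { x | ∃ Γ : Fin k → Matrix (Fin b) (Fin b) ℂ,
      x = (Polynomial.aeval A (Qpoly ξ))⁻¹ * ∑ i : Fin k, A ^ (i : ℕ) * v * Γ i }

/-- The `d`-fold Kronecker product, encoded entrywise on the (dependent) product
index sets: `(V₁ ⊗ ⋯ ⊗ V_d) p q = ∏ᵢ Vᵢ (pᵢ) (qᵢ)`. -/
noncomputable def bigKron {d : ℕ} {N M : Fin d → ℕ}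
    (V : ∀ j, Matrix (Fin (N j)) (Fin (M j)) ℂ) :
    Matrix (∀ j, Fin (N j)) (∀ j, Fin (M j)) ℂ :=
  Matrix.of fun p q => ∏ j, V j (p j) (q j)

lemma bigKron_mul {d : ℕ} {n m l : Fin d → ℕ}
    (U : ∀ i, Matrix (Fin (n i)) (Fin (m i)) ℂ)
    (V : ∀ i, Matrix (Fin (m i)) (Fin (l i)) ℂ) :
    bigKron (fun i => U i * V i) = bigKron U * bigKron V := by
  ext p r
  simp only [bigKron, Matrix.of_apply, Matrix.mul_apply]
  rw [Fintype.prod_sum]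
  exact Finset.sum_congr rfl fun x _ => Finset.prod_mul_distrib

lemma bigKron_sum {d : ℕ} {n m k : Fin d → ℕ}
    (F : ∀ i, Fin (k i) → Matrix (Fin (n i)) (Fin (m i)) ℂ) :
    bigKron (fun i => ∑ t : Fin (k i), F i t)
      = ∑ I : ∀ i, Fin (k i), bigKron (fun i => F i (I i)) := by
  ext p q
  simp only [bigKron, Matrix.of_apply, Matrix.sum_apply]
  exact Fintype.prod_sum _

/-- The tensorized block rational Krylov subspace (all finite sums
`Σⱼ vⱼ Γⱼ` with `vⱼ` a Kronecker product of elements of the `𝒬_{kᵢ}(Aᵢ,Cᵢ,ξᵢ)`)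
coincides with the set of all
`(Q₁(A₁)⁻¹ ⊗ ⋯ ⊗ Q_d(A_d)⁻¹) ⬝ (P(A₁,…,A_d)∘(C₁,…,C_d))`,
with `P` a multivariate matrix polynomial of degree `< kᵢ` in the `i`-th variable. -/
theorem stmt_0 {d : ℕ} (hd : 1 ≤ d) (n b k : Fin d → ℕ)
    (A : ∀ i, Matrix (Fin (n i)) (Fin (n i)) ℂ)
    (Cblk : ∀ i, Matrix (Fin (n i)) (Fin (b i)) ℂ)
    (ξ : ∀ i, Fin (k i) → Option ℂ)
    (hξ : ∀ i j z, ξ i j = some z →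
      (A i - z • (1 : Matrix (Fin (n i)) (Fin (n i)) ℂ)).det ≠ 0) :
    { x : Matrix (∀ i, Fin (n i)) (∀ i, Fin (b i)) ℂ |
      ∃ (s : ℕ) (v : Fin s → Matrix (∀ i, Fin (n i)) (∀ i, Fin (b i)) ℂ)
        (Γ : Fin s → Matrix (∀ i, Fin (b i)) (∀ i, Fin (b i)) ℂ),
        (∀ j, ∃ u : ∀ i, Matrix (Fin (n i)) (Fin (b i)) ℂ,
          (∀ i, u i ∈ ratKrylov (A i) (Cblk i) (ξ i)) ∧ v j = bigKron u) ∧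
        x = ∑ j, v j * Γ j }
    = { x | ∃ Γ : (∀ i, Fin (k i)) → Matrix (∀ i, Fin (b i)) (∀ i, Fin (b i)) ℂ,
        x = bigKron (fun i => (Polynomial.aeval (A i) (Qpoly (ξ i)))⁻¹)
            * ∑ I : ∀ i, Fin (k i), bigKron (fun i => A i ^ (I i : ℕ) * Cblk i) * Γ I } := by
  set K := bigKron (fun i => (Polynomial.aeval (A i) (Qpoly (ξ i)))⁻¹) with hK
  set B : (∀ i, Fin (k i)) → Matrix (∀ i, Fin (n i)) (∀ i, Fin (b i)) ℂ :=
    fun I => bigKron (fun i => A i ^ (I i : ℕ) * Cblk i) with hB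
  ext x
  constructor
  · rintro ⟨s, v, Γ, hv, rfl⟩
    choose u hu hvu using hv
    choose G hG using fun j i => hu j i
    have key : ∀ j, v j * Γ j
        = K * ∑ I : ∀ i, Fin (k i), B I * (bigKron (fun i => G j i (I i)) * Γ j) := by
      intro j
      have h1 : v j = K * ∑ I : ∀ i, Fin (k i), B I * bigKron (fun i => G j i (I i)) := by
        rw [hvu j]
        have h2 : u j
            = fun i => (Polynomial.aeval (A i) (Qpoly (ξ i)))⁻¹
                * ∑ t : Fin (k i), A i ^ (t : ℕ) * Cblk i * G j i t := by
          funext i; exact hG j i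
        rw [h2, bigKron_mul, hK]
        congr 1
        rw [bigKron_sum]
        refine Finset.sum_congr rfl fun I _ => ?_
        rw [← bigKron_mul]
      rw [h1, Matrix.mul_assoc, Matrix.sum_mul]
      congr 1
      refine Finset.sum_congr rfl fun I _ => ?_
      rw [Matrix.mul_assoc]
    refine ⟨fun I => ∑ j, bigKron (fun i => G j i (I i)) * Γ j, ?_⟩
    calc ∑ j, v j * Γ j
        = ∑ j, K * ∑ I : ∀ i, Fin (k i), B I * (bigKron (fun i => G j i (I i)) * Γ j) :=
          Finset.sum_congr rfl fun j _ => key j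
      _ = K * ∑ j, ∑ I : ∀ i, Fin (k i), B I * (bigKron (fun i => G j i (I i)) * Γ j) := by
          rw [Matrix.mul_sum]
      _ = K * ∑ I : ∀ i, Fin (k i), ∑ j, B I * (bigKron (fun i => G j i (I i)) * Γ j) := by
          rw [Finset.sum_comm]
      _ = K * ∑ I : ∀ i, Fin (k i), B I * ∑ j, bigKron (fun i => G j i (I i)) * Γ j := by
          congr 1
          exact Finset.sum_congr rfl fun I _ => (Matrix.mul_sum _ _ _).symm
  · rintro ⟨Γ, rfl⟩
    let e : Fin (Fintype.card (∀ i, Fin (k i))) ≃ (∀ i, Fin (k i)) :=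
      (Fintype.equivFin _).symm
    refine ⟨Fintype.card (∀ i, Fin (k i)), fun j => K * B (e j), fun j => Γ (e j), ?_, ?_⟩
    · intro j
      refine ⟨fun i => (Polynomial.aeval (A i) (Qpoly (ξ i)))⁻¹
        * (A i ^ ((e j) i : ℕ) * Cblk i), fun i => ?_, (bigKron_mul _ _).symm⟩
      refine ⟨fun t => if t = e j i then 1 else 0, ?_⟩
      congr 1
      rw [Finset.sum_eq_single (e j i)]
      · simp
      · intro t _ ht; simp [ht]
      · simp
    · rw [Matrix.mul_sum]
      rw [← Equiv.sum_comp e (fun I => K * (B I * Γ I))]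
      exact Finset.sum_congr rfl fun j _ => (Matrix.mul_assoc _ _ _).symm
end

section
/- With the projection setup below, the residual r = c − 𝐀𝐕y can be represented as r = Σ_{i=1}^d V̄_i r_i + ĉ, where ĉ := (∏_{i=1}^d (I − V̄_i V̄_i^H)) c; moreover ĉ = 0 whenever c lies in the column space of 𝐕. -/
open Matrix

/-- Sizes of the mixed index space in which the `i`-th slot keeps size `n i`
and all other slots are projected to size `m j`. -/
def mixN {d : ℕ} (n m : Fin d → ℕ) (i j : Fin d) : ℕ := if j = i then n j else m j

/-- Kronecker sum `Σⱼ I ⊗ ⋯ ⊗ Bⱼ ⊗ ⋯ ⊗ I`, encoded entrywise on the (dependent)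
product index set. -/
noncomputable def kronSum {d : ℕ} (N : Fin d → ℕ)
    (B : ∀ j, Matrix (Fin (N j)) (Fin (N j)) ℂ) :
    Matrix (∀ j, Fin (N j)) (∀ j, Fin (N j)) ℂ :=
  ∑ j, Matrix.of fun p q =>
    B j (p j) (q j) * ∏ l ∈ Finset.univ.erase j, (if p l = q l then (1 : ℂ) else 0)

/-- `V̄ᵢ = V_d ⊗ ⋯ ⊗ V_{i+1} ⊗ I_{nᵢ} ⊗ V_{i-1} ⊗ ⋯ ⊗ V₁`. -/
noncomputable def VbarM {d : ℕ} (n m : Fin d → ℕ)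
    (V : ∀ j, Matrix (Fin (n j)) (Fin (m j)) ℂ) (i : Fin d) :
    Matrix (∀ j, Fin (n j)) (∀ j, Fin (mixN n m i j)) ℂ :=
  Matrix.of fun p q => ∏ j,
    if h : j = i then (if p j = Fin.cast (by simp [mixN, h]) (q j) then (1 : ℂ) else 0)
    else V j (p j) (Fin.cast (by simp [mixN, h]) (q j))

/-- `𝐕ᵢ = I_{m_d} ⊗ ⋯ ⊗ I_{m_{i+1}} ⊗ Vᵢ ⊗ I_{m_{i-1}} ⊗ ⋯ ⊗ I_{m₁}`. -/
noncomputable def ViM {d : ℕ} (n m : Fin d → ℕ)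
    (V : ∀ j, Matrix (Fin (n j)) (Fin (m j)) ℂ) (i : Fin d) :
    Matrix (∀ j, Fin (mixN n m i j)) (∀ j, Fin (m j)) ℂ :=
  Matrix.of fun p q => ∏ j,
    if h : j = i then V j (Fin.cast (by simp [mixN, h]) (p j)) (q j)
    else (if Fin.cast (show mixN n m i j = m j by simp [mixN, h]) (p j) = q j
      then (1 : ℂ) else 0)

/-- `Mᵢ`: the Kronecker sum whose `j`-th term carries `Aⱼ^{(k)} = VⱼᴴAⱼVⱼ` in slot
`j ≠ i` and `Aᵢ` in slot `i`, the identities having size `m_l` (`l ≠ i`) resp. `nᵢ`. -/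
noncomputable def MiM {d : ℕ} (n m : Fin d → ℕ)
    (A : ∀ j, Matrix (Fin (n j)) (Fin (n j)) ℂ)
    (V : ∀ j, Matrix (Fin (n j)) (Fin (m j)) ℂ) (i : Fin d) :
    Matrix (∀ j, Fin (mixN n m i j)) (∀ j, Fin (mixN n m i j)) ℂ :=
  kronSum (mixN n m i) fun j =>
    if h : j = i then
      Matrix.reindex (finCongr (show n j = mixN n m i j by simp [mixN, h]))
        (finCongr (show n j = mixN n m i j by simp [mixN, h])) (A j)
    else
      Matrix.reindex (finCongr (show m j = mixN n m i j by simp [mixN, h]))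
        (finCongr (show m j = mixN n m i j by simp [mixN, h])) ((V j)ᴴ * A j * V j)

/-! Write `Pᵢ = V̄ᵢV̄ᵢᴴ` and `P = 𝐕𝐕ᴴ`. Both are Kronecker products of the slot projections
`VⱼVⱼᴴ` (with the identity in slot `i` for `Pᵢ`), so `PᵢPₖ = P` for `i ≠ k` and `PᵢP = P`, and
expanding the product gives `∏ᵢ (I - Pᵢ) = I - Σᵢ Pᵢ + (d - 1) P`. On the other side
`V̄ᵢ rᵢ = Pᵢ c - Pᵢ𝐀𝐕 y` because `V̄ᵢᴴ𝐀𝐕 = Mᵢ𝐕ᵢ`, and `Pᵢ` fixes the `i`-th term of `𝐀𝐕` while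
turning its `j`-th term (`j ≠ i`) into the `j`-th term of `𝐕𝐀̃`, so `Σᵢ Pᵢ𝐀𝐕 = 𝐀𝐕 + (d - 1) 𝐕𝐀̃`.
As `𝐕𝐀̃y = 𝐕𝐕ᴴc = P c`, everything but `c - 𝐀𝐕y` cancels. If `c = 𝐕z`, then `Pᵢ c = P c = c`,
so `ĉ = c - d c + (d - 1) c = 0`; for `d = 0` the projected equation itself reads `0 = 𝐕ᴴc = z`.
-/

section Algebra

variable {R : Type*} [Ring R] {ι : Type*} {p : ι → R} {P : R}

lemma mul_sum_map_eq_length_nsmul (hpp : ∀ i k, i ≠ k → p i * p k = P) {a : ι} {L : List ι}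
    (ha : a ∉ L) : p a * (L.map p).sum = L.length • P := by
  rw [← List.sum_map_mul_left,
    List.map_congr_left fun k hk => hpp a k (ne_of_mem_of_not_mem hk ha).symm, List.map_const',
    List.sum_replicate]

lemma prod_map_one_sub_eq_of_mul_eq (hpp : ∀ i k, i ≠ k → p i * p k = P)
    (hpP : ∀ i, p i * P = P) :
    ∀ {a : ι} {L : List ι}, (a :: L).Nodup →
      ((a :: L).map fun i => 1 - p i).prod = 1 - ((a :: L).map p).sum + L.length • P
  | a, [], _ => by simp
  | a, b :: L, hnd => by
    obtain ⟨ha, hnd⟩ := List.nodup_cons.mp hnd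
    rw [List.map_cons, List.prod_cons, prod_map_one_sub_eq_of_mul_eq hpp hpP hnd, sub_mul,
      one_mul, mul_add, mul_sub, mul_one, mul_sum_map_eq_length_nsmul hpp ha, mul_smul_comm, hpP]
    simp only [List.map_cons, List.sum_cons, List.length_cons, succ_nsmul]
    abel

lemma sum_sum_add_sum_eq_of_offDiag {M ι : Type*} [AddCommMonoid M] [Fintype ι] [DecidableEq ι]
    (f : ι → ι → M) (b : ι → M) (hoff : ∀ i j, j ≠ i → f i j = b j) :
    ∑ i, ∑ j, f i j + ∑ i, b i = ∑ i, f i i + Fintype.card ι • ∑ j, b j := by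
  rw [← Finset.sum_add_distrib, ← Finset.card_univ, ← Finset.sum_const, ← Finset.sum_add_distrib]
  refine Finset.sum_congr rfl fun i _ => ?_
  rw [← Finset.add_sum_erase _ _ (Finset.mem_univ i),
    ← Finset.add_sum_erase _ b (Finset.mem_univ i),
    Finset.sum_congr rfl fun j hj => hoff i j (Finset.ne_of_mem_erase hj)]
  abel

end Algebra

section Cast

/- The slot sizes `mixN n m i j` equal `n j` or `m j` only propositionally, so the slot factors of
`V̄ᵢ`, `𝐕ᵢ` and `Mᵢ` are built from ordinary matrices through these casts. -/

variable {α : Type*} {a b c e : ℕ}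

def castCols (h : c = b) (X : Matrix (Fin a) (Fin b) α) : Matrix (Fin a) (Fin c) α :=
  X.submatrix id (Fin.cast h)

def castRows (h : c = a) (X : Matrix (Fin a) (Fin b) α) : Matrix (Fin c) (Fin b) α :=
  X.submatrix (Fin.cast h) id

@[simp]
lemma conjTranspose_castCols [Star α] (h : c = b) (X : Matrix (Fin a) (Fin b) α) :
    (castCols h X)ᴴ = castRows h Xᴴ :=
  rfl

@[simp]
lemma castRows_mul [NonUnitalNonAssocSemiring α] (h : c = a) (X : Matrix (Fin a) (Fin b) α)
    (Y : Matrix (Fin b) (Fin e) α) : castRows h X * Y = castRows h (X * Y) := by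
  ext p q
  simp [castRows, Matrix.mul_apply]

@[simp]
lemma castCols_mul_castRows [NonUnitalNonAssocSemiring α] (h : c = b)
    (X : Matrix (Fin a) (Fin b) α) (Y : Matrix (Fin b) (Fin e) α) :
    castCols h X * castRows h Y = X * Y :=
  (submatrix_mul_equiv X Y id (finCongr h) id).trans (submatrix_id_id _)

end Cast

section Kronecker

variable {d : ℕ}

lemma bigKron_mul_s2 {N M K : Fin d → ℕ} (W : ∀ j, Matrix (Fin (N j)) (Fin (M j)) ℂ)
    (U : ∀ j, Matrix (Fin (M j)) (Fin (K j)) ℂ) :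
    bigKron W * bigKron U = bigKron fun j => W j * U j := by
  ext p q
  simp only [bigKron, mul_apply, of_apply, Fintype.prod_sum, Finset.prod_mul_distrib]

lemma conjTranspose_bigKron {N M : Fin d → ℕ} (W : ∀ j, Matrix (Fin (N j)) (Fin (M j)) ℂ) :
    (bigKron W)ᴴ = bigKron fun j => (W j)ᴴ := by
  ext p q
  simp [bigKron, conjTranspose_apply]

lemma bigKron_one {N : Fin d → ℕ} :
    bigKron (fun j => (1 : Matrix (Fin (N j)) (Fin (N j)) ℂ)) = 1 := by
  ext p q
  simp only [bigKron, of_apply, one_apply]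
  split_ifs with h
  · simp [h]
  · obtain ⟨j, hj⟩ := Function.ne_iff.mp h
    exact Finset.prod_eq_zero (Finset.mem_univ j) (by simp [hj])

lemma kronSum_eq_sum_bigKron (N : Fin d → ℕ) (B : ∀ j, Matrix (Fin (N j)) (Fin (N j)) ℂ) :
    kronSum N B = ∑ j, bigKron (Function.update 1 j (B j)) := by
  refine Finset.sum_congr rfl fun j _ => ?_
  ext p q
  rw [bigKron, of_apply, of_apply, ← Finset.mul_prod_erase _ _ (Finset.mem_univ j),
    Function.update_self]
  congr 1
  refine Finset.prod_congr rfl fun l hl => ?_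
  rw [Function.update_of_ne (Finset.ne_of_mem_erase hl), Pi.one_apply, one_apply]

lemma kronSum_fin_zero (N : Fin 0 → ℕ) (B : ∀ j, Matrix (Fin (N j)) (Fin (N j)) ℂ) :
    kronSum N B = 0 := by
  simp [kronSum]

end Kronecker

section Factors

variable {d : ℕ} (n m : Fin d → ℕ) (V : ∀ j, Matrix (Fin (n j)) (Fin (m j)) ℂ)
  (A : ∀ j, Matrix (Fin (n j)) (Fin (n j)) ℂ)

lemma mixN_of_eq {i j : Fin d} (h : j = i) : mixN n m i j = n j := by simp [mixN, h]

lemma mixN_of_ne {i j : Fin d} (h : j ≠ i) : mixN n m i j = m j := by simp [mixN, h]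

noncomputable def vbarFactor (i j : Fin d) : Matrix (Fin (n j)) (Fin (mixN n m i j)) ℂ :=
  if h : j = i then castCols (mixN_of_eq n m h) 1 else castCols (mixN_of_ne n m h) (V j)

noncomputable def viFactor (i j : Fin d) : Matrix (Fin (mixN n m i j)) (Fin (m j)) ℂ :=
  if h : j = i then castRows (mixN_of_eq n m h) (V j) else castRows (mixN_of_ne n m h) 1

noncomputable def miFactor (i j : Fin d) :
    Matrix (Fin (mixN n m i j)) (Fin (mixN n m i j)) ℂ :=
  if h : j = i then castRows (mixN_of_eq n m h) (castCols (mixN_of_eq n m h) (A j))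
  else castRows (mixN_of_ne n m h) (castCols (mixN_of_ne n m h) ((V j)ᴴ * A j * V j))

lemma VbarM_eq_bigKron (i : Fin d) : VbarM n m V i = bigKron (vbarFactor n m V i) := by
  ext p q
  simp only [VbarM, bigKron, of_apply]
  refine Finset.prod_congr rfl fun j _ => ?_
  by_cases h : j = i <;> simp [vbarFactor, castCols, h, one_apply]

lemma ViM_eq_bigKron (i : Fin d) : ViM n m V i = bigKron (viFactor n m V i) := by
  ext p q
  simp only [ViM, bigKron, of_apply]
  refine Finset.prod_congr rfl fun j _ => ?_
  by_cases h : j = i <;> simp [viFactor, castRows, h, one_apply]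

lemma MiM_eq_kronSum (i : Fin d) : MiM n m A V i = kronSum (mixN n m i) (miFactor n m V A i) :=
  rfl

end Factors

section Projectors

variable {d : ℕ} {n m : Fin d → ℕ} {V : ∀ j, Matrix (Fin (n j)) (Fin (m j)) ℂ}

lemma conjTranspose_bigKron_mul_bigKron (hV : ∀ j, (V j)ᴴ * V j = 1) :
    (bigKron V)ᴴ * bigKron V = 1 := by
  rw [conjTranspose_bigKron, bigKron_mul_s2, funext hV, bigKron_one]

lemma VbarM_mul_conjTranspose (i : Fin d) :
    VbarM n m V i * (VbarM n m V i)ᴴ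
      = bigKron (Function.update (fun l => V l * (V l)ᴴ) i 1) := by
  rw [VbarM_eq_bigKron, conjTranspose_bigKron, bigKron_mul_s2]
  congr 1
  funext l
  rcases eq_or_ne l i with rfl | h <;> simp [vbarFactor, *]

lemma VbarM_mul_conjTranspose_mul_bigKron (hV : ∀ j, (V j)ᴴ * V j = 1) (i : Fin d) :
    VbarM n m V i * (VbarM n m V i)ᴴ * bigKron V = bigKron V := by
  rw [VbarM_mul_conjTranspose, bigKron_mul_s2]
  congr 1
  funext l
  rcases eq_or_ne l i with rfl | h <;> simp [*, Matrix.mul_assoc]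

lemma VbarM_mul_conjTranspose_mul_of_ne (hV : ∀ j, (V j)ᴴ * V j = 1) {i k : Fin d}
    (hik : i ≠ k) :
    VbarM n m V i * (VbarM n m V i)ᴴ * (VbarM n m V k * (VbarM n m V k)ᴴ)
      = bigKron V * (bigKron V)ᴴ := by
  rw [VbarM_mul_conjTranspose, VbarM_mul_conjTranspose, conjTranspose_bigKron, bigKron_mul_s2,
    bigKron_mul_s2]
  congr 1
  funext l
  rcases eq_or_ne l i with rfl | hli
  · simp [hik]
  rcases eq_or_ne l k with rfl | hlk
  · simp [hli]
  simp [hli, hlk, Matrix.mul_assoc, ← Matrix.mul_assoc (V l)ᴴ, hV]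

lemma VbarM_mul_conjTranspose_mul_bigKron_mul_conjTranspose (hV : ∀ j, (V j)ᴴ * V j = 1)
    (i : Fin d) :
    VbarM n m V i * (VbarM n m V i)ᴴ * (bigKron V * (bigKron V)ᴴ)
      = bigKron V * (bigKron V)ᴴ := by
  rw [← Matrix.mul_assoc, VbarM_mul_conjTranspose_mul_bigKron hV]

lemma conjTranspose_VbarM_mul_kronSum_mul_bigKron (hV : ∀ j, (V j)ᴴ * V j = 1)
    (A : ∀ j, Matrix (Fin (n j)) (Fin (n j)) ℂ) (i : Fin d) :
    (VbarM n m V i)ᴴ * (kronSum n A * bigKron V) = MiM n m A V i * ViM n m V i := by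
  rw [VbarM_eq_bigKron, ViM_eq_bigKron, MiM_eq_kronSum, kronSum_eq_sum_bigKron,
    kronSum_eq_sum_bigKron, conjTranspose_bigKron, Matrix.sum_mul, Matrix.mul_sum,
    Matrix.sum_mul]
  refine Finset.sum_congr rfl fun j _ => ?_
  rw [bigKron_mul_s2, bigKron_mul_s2, bigKron_mul_s2]
  congr 1
  funext l
  rcases eq_or_ne l j with rfl | hlj <;> rcases eq_or_ne l i with rfl | hli <;>
    simp [vbarFactor, viFactor, miFactor, *, Matrix.mul_assoc]

lemma sum_VbarM_mul_conjTranspose_mul_kronSum_mul_bigKron (hV : ∀ j, (V j)ᴴ * V j = 1)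
    (A : ∀ j, Matrix (Fin (n j)) (Fin (n j)) ℂ) :
    ∑ i, VbarM n m V i * (VbarM n m V i)ᴴ * (kronSum n A * bigKron V)
        + bigKron V * kronSum m (fun j => (V j)ᴴ * A j * V j)
      = kronSum n A * bigKron V + d • (bigKron V * kronSum m fun j => (V j)ᴴ * A j * V j) := by
  rw [kronSum_eq_sum_bigKron n A, kronSum_eq_sum_bigKron m]
  simp only [VbarM_mul_conjTranspose, Matrix.sum_mul, Matrix.mul_sum, bigKron_mul_s2]
  rw [sum_sum_add_sum_eq_of_offDiag _ _ fun i j hji => ?off, Fintype.card_fin]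
  case off =>
    congr 1
    funext l
    rcases eq_or_ne l j with rfl | hlj
    · simp [hji, Matrix.mul_assoc]
    rcases eq_or_ne l i with rfl | hli <;> simp [*, Matrix.mul_assoc]
  refine congrArg (· + _) (Finset.sum_congr rfl fun i _ => congrArg bigKron (funext fun l => ?_))
  rcases eq_or_ne l i with rfl | hli <;> simp [*, Matrix.mul_assoc]

end Projectors

section Remainder

variable {d : ℕ} {n m : Fin (d + 1) → ℕ} {V : ∀ j, Matrix (Fin (n j)) (Fin (m j)) ℂ}

lemma prod_one_sub_VbarM_mul_conjTranspose (hV : ∀ j, (V j)ᴴ * V j = 1) :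
    ((List.finRange (d + 1)).map fun i => 1 - VbarM n m V i * (VbarM n m V i)ᴴ).prod
      = 1 - ∑ i, VbarM n m V i * (VbarM n m V i)ᴴ + d • (bigKron V * (bigKron V)ᴴ) := by
  have hnd : ((0 : Fin (d + 1)) :: (List.finRange d).map Fin.succ).Nodup := by
    rw [← List.finRange_succ]
    exact List.nodup_finRange _
  rw [List.finRange_succ,
    prod_map_one_sub_eq_of_mul_eq (fun i k => VbarM_mul_conjTranspose_mul_of_ne hV)
      (VbarM_mul_conjTranspose_mul_bigKron_mul_conjTranspose hV) hnd,
    ← List.finRange_succ, ← Fin.sum_univ_def, List.length_map, List.length_finRange]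

lemma prod_one_sub_VbarM_mul_conjTranspose_mul_bigKron (hV : ∀ j, (V j)ᴴ * V j = 1) :
    ((List.finRange (d + 1)).map fun i => 1 - VbarM n m V i * (VbarM n m V i)ᴴ).prod
      * bigKron V = 0 := by
  rw [prod_one_sub_VbarM_mul_conjTranspose hV, Matrix.add_mul, Matrix.sub_mul, Matrix.one_mul,
    Matrix.sum_mul, Finset.sum_congr rfl fun i _ => VbarM_mul_conjTranspose_mul_bigKron hV i,
    Matrix.smul_mul, Matrix.mul_assoc, conjTranspose_bigKron_mul_bigKron hV, Matrix.mul_one,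
    Finset.sum_const, Finset.card_univ, Fintype.card_fin, succ_nsmul]
  abel

end Remainder

theorem stmt_2_general {d : ℕ} (n m : Fin d → ℕ)
    (A : ∀ i, Matrix (Fin (n i)) (Fin (n i)) ℂ)
    (V : ∀ i, Matrix (Fin (n i)) (Fin (m i)) ℂ)
    (hV : ∀ i, (V i)ᴴ * V i = 1)
    (c : (∀ j, Fin (n j)) → ℂ)
    (y : (∀ j, Fin (m j)) → ℂ)
    (hy : (kronSum m fun i => (V i)ᴴ * A i * V i) *ᵥ y = (bigKron V)ᴴ *ᵥ c) :
    (c - kronSum n A *ᵥ (bigKron V *ᵥ y))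
      = (∑ i, VbarM n m V i *ᵥ
          ((VbarM n m V i)ᴴ *ᵥ c - MiM n m A V i *ᵥ (ViM n m V i *ᵥ y)))
        + ((List.finRange d).map fun i => 1 - VbarM n m V i * (VbarM n m V i)ᴴ).prod *ᵥ c
    ∧ ((∃ z, c = bigKron V *ᵥ z) →
        ((List.finRange d).map fun i => 1 - VbarM n m V i * (VbarM n m V i)ᴴ).prod *ᵥ c
          = 0) := by
  obtain _ | d := d
  · refine ⟨by simp [kronSum_fin_zero], fun ⟨z, hz⟩ => ?_⟩
    have hz0 : z = 0 := by
      simpa [kronSum_fin_zero, hz, mulVec_mulVec, conjTranspose_bigKron_mul_bigKron hV]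
        using hy.symm
    simp [hz, hz0]
  have hsummand (i) :
      VbarM n m V i *ᵥ ((VbarM n m V i)ᴴ *ᵥ c - MiM n m A V i *ᵥ (ViM n m V i *ᵥ y))
      = (VbarM n m V i * (VbarM n m V i)ᴴ) *ᵥ c
        - (VbarM n m V i * (VbarM n m V i)ᴴ * (kronSum n A * bigKron V)) *ᵥ y := by
    rw [mulVec_sub, mulVec_mulVec, mulVec_mulVec, mulVec_mulVec, Matrix.mul_assoc _ _ (_ * _),
      conjTranspose_VbarM_mul_kronSum_mul_bigKron hV, Matrix.mul_assoc]
  have hT : (bigKron V * kronSum m fun j => (V j)ᴴ * A j * V j) *ᵥ y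
      = (bigKron V * (bigKron V)ᴴ) *ᵥ c := by
    rw [← mulVec_mulVec, hy, mulVec_mulVec]
  have hsum := congrArg (· *ᵥ y) (sum_VbarM_mul_conjTranspose_mul_kronSum_mul_bigKron hV A)
  simp only [add_mulVec, sum_mulVec, smul_mulVec, hT] at hsum
  refine ⟨?_, ?_⟩
  · rw [Finset.sum_congr rfl fun i _ => hsummand i, Finset.sum_sub_distrib, eq_sub_of_add_eq hsum,
      prod_one_sub_VbarM_mul_conjTranspose hV, add_mulVec, sub_mulVec, one_mulVec, sum_mulVec,
      smul_mulVec, mulVec_mulVec, succ_nsmul]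
    abel
  · rintro ⟨z, rfl⟩
    rw [mulVec_mulVec, prod_one_sub_VbarM_mul_conjTranspose_mul_bigKron hV, zero_mulVec]

/-- Residual representation
`r = Σᵢ V̄ᵢ rᵢ + ĉ` with `ĉ = (∏ᵢ (I - V̄ᵢV̄ᵢᴴ)) c`, the remainder `ĉ` vanishing
whenever `c` lies in the column space of `𝐕`. -/
theorem stmt_2 {d : ℕ} (n m : Fin d → ℕ)
    (A : ∀ i, Matrix (Fin (n i)) (Fin (n i)) ℂ)
    (V : ∀ i, Matrix (Fin (n i)) (Fin (m i)) ℂ)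
    (hV : ∀ i, (V i)ᴴ * V i = 1)
    (c : (∀ j, Fin (n j)) → ℂ)
    (hAt : IsUnit (kronSum m fun i => (V i)ᴴ * A i * V i))
    (y : (∀ j, Fin (m j)) → ℂ)
    (hy : (kronSum m fun i => (V i)ᴴ * A i * V i) *ᵥ y = (bigKron V)ᴴ *ᵥ c) :
    (c - kronSum n A *ᵥ (bigKron V *ᵥ y))
      = (∑ i, VbarM n m V i *ᵥ
          ((VbarM n m V i)ᴴ *ᵥ c - MiM n m A V i *ᵥ (ViM n m V i *ᵥ y)))
        + ((List.finRange d).map fun i => 1 - VbarM n m V i * (VbarM n m V i)ᴴ).prod *ᵥ c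
    ∧ ((∃ z, c = bigKron V *ᵥ z) →
        ((List.finRange d).map fun i => 1 - VbarM n m V i * (VbarM n m V i)ᴴ).prod *ᵥ c
          = 0) :=
  stmt_2_general n m A V hV c y hy
end

section
/- With the projection setup below, if in addition c lies in the column space of 𝐕 = V_d⊗⋯⊗V_1, then (∏_{i=1}^d (I − V̄_i V̄_i^H)) c = 0 and the squared Euclidean norm of the residual satisfies ‖r‖₂² = Σ_{i=1}^d ‖V̄_i^H r‖₂². -/
open Matrix

namespace Stmt4Aux

noncomputable def kron {d : ℕ} {N M : Fin d → ℕ}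
    (A : ∀ j, Matrix (Fin (N j)) (Fin (M j)) ℂ) :
    Matrix (∀ j, Fin (N j)) (∀ j, Fin (M j)) ℂ :=
  Matrix.of fun p q => ∏ j, A j (p j) (q j)

@[simp] lemma kron_apply {d : ℕ} {N M : Fin d → ℕ}
    (A : ∀ j, Matrix (Fin (N j)) (Fin (M j)) ℂ) (p q) :
    kron A p q = ∏ j, A j (p j) (q j) := rfl

lemma kron_mul {d : ℕ} {N M K : Fin d → ℕ}
    (A : ∀ j, Matrix (Fin (N j)) (Fin (M j)) ℂ)
    (B : ∀ j, Matrix (Fin (M j)) (Fin (K j)) ℂ) :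
    kron A * kron B = kron fun j => A j * B j := by
  ext p r
  simp only [Matrix.mul_apply, kron_apply]
  conv_rhs => rw [Finset.prod_univ_sum, Fintype.piFinset_univ]
  exact Finset.sum_congr rfl fun x _ => (Finset.prod_mul_distrib).symm

lemma kron_conjTranspose {d : ℕ} {N M : Fin d → ℕ}
    (A : ∀ j, Matrix (Fin (N j)) (Fin (M j)) ℂ) :
    (kron A)ᴴ = kron fun j => (A j)ᴴ := by
  ext p q
  simp [kron_apply, conjTranspose_apply, star_prod]

lemma kron_one {d : ℕ} {N : Fin d → ℕ} :
    kron (fun j => (1 : Matrix (Fin (N j)) (Fin (N j)) ℂ)) = 1 := by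
  ext p q
  by_cases h : p = q
  · subst h; simp [Matrix.one_apply]
  · rw [kron_apply, Matrix.one_apply_ne h]
    obtain ⟨j, hj⟩ := Function.ne_iff.mp h
    exact Finset.prod_eq_zero (Finset.mem_univ j) (Matrix.one_apply_ne hj)

lemma kronSum_eq {d : ℕ} (N : Fin d → ℕ) (B : ∀ j, Matrix (Fin (N j)) (Fin (N j)) ℂ) :
    kronSum N B = ∑ j, kron (Function.update
      (fun l => (1 : Matrix (Fin (N l)) (Fin (N l)) ℂ)) j (B j)) := by
  refine Finset.sum_congr rfl fun j _ => ?_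
  ext p q
  simp only [of_apply, kron_apply]
  rw [← Finset.mul_prod_erase Finset.univ _ (Finset.mem_univ j), Function.update_self]
  congr 1
  refine Finset.prod_congr rfl fun l hl => ?_
  rw [Function.update_of_ne (Finset.ne_of_mem_erase hl), Matrix.one_apply]

end Stmt4Aux
namespace Stmt4Aux

variable {d : ℕ} (n m : Fin d → ℕ) (V : ∀ j, Matrix (Fin (n j)) (Fin (m j)) ℂ) (i : Fin d)

noncomputable def Fbar (j : Fin d) : Matrix (Fin (n j)) (Fin (mixN n m i j)) ℂ :=
  Matrix.of fun p q =>
    if h : j = i then (if p = Fin.cast (by simp [mixN, h]) q then (1 : ℂ) else 0)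
    else V j p (Fin.cast (by simp [mixN, h]) q)

lemma VbarM_eq : VbarM n m V i = kron (Fbar n m V i) := rfl

noncomputable def Gfam : ∀ j, Matrix (Fin (n j)) (Fin (n j)) ℂ :=
  fun j => if j = i then 1 else V j * (V j)ᴴ

lemma slotG (j : Fin d) :
    Fbar n m V i j * (Fbar n m V i j)ᴴ = Gfam n m V i j := by
  by_cases h : j = i
  · subst h
    have e : mixN n m j j = n j := by simp [mixN]
    ext p r
    simp only [Gfam, if_pos rfl, Matrix.mul_apply, conjTranspose_apply, Fbar, of_apply,
      eq_self_iff_true, dite_true, if_true]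
    rw [Fintype.sum_equiv (finCongr e)
      (fun q => (if p = Fin.cast e q then (1:ℂ) else 0) * star (if r = Fin.cast e q then (1:ℂ) else 0))
      (fun x => (if p = x then (1:ℂ) else 0) * star (if r = x then (1:ℂ) else 0)) (fun q => rfl)]
    simp [Matrix.one_apply, apply_ite (star : ℂ → ℂ), ite_mul, Finset.sum_ite_eq, eq_comm]
  · have e : mixN n m i j = m j := by simp [mixN, h]
    ext p r
    simp only [Gfam, if_neg h, Matrix.mul_apply, conjTranspose_apply, Fbar, of_apply, dif_neg h]
    exact Fintype.sum_equiv (finCongr e) _ _ (fun q => rfl)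

lemma P_eq : VbarM n m V i * (VbarM n m V i)ᴴ = kron (Gfam n m V i) := by
  rw [VbarM_eq, kron_conjTranspose, kron_mul]
  exact congrArg kron (funext (slotG n m V i))

end Stmt4Aux
namespace Stmt4Aux

variable {d : ℕ} (n m : Fin d → ℕ) (A : ∀ j, Matrix (Fin (n j)) (Fin (n j)) ℂ)
  (V : ∀ j, Matrix (Fin (n j)) (Fin (m j)) ℂ) (i : Fin d)

noncomputable def Tt (l : Fin d) : Matrix (∀ j, Fin (m j)) (∀ j, Fin (m j)) ℂ :=
  kron (Function.update (fun j => (1 : Matrix (Fin (m j)) (Fin (m j)) ℂ)) l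
    ((V l)ᴴ * A l * V l))

lemma h1 (hV : ∀ j, (V j)ᴴ * V j = 1) :
    kron (Gfam n m V i) * bigKron V = bigKron V := by
  show kron (Gfam n m V i) * kron V = kron V
  rw [kron_mul]
  refine congrArg kron (funext fun j => ?_)
  by_cases h : j = i
  · simp [Gfam, h]
  · simp only [Gfam, if_neg h]
    rw [Matrix.mul_assoc, hV j, Matrix.mul_one]

lemma hAV : kronSum n A * bigKron V = ∑ l, kron (Function.update V l (A l * V l)) := by
  show kronSum n A * kron V = _
  rw [kronSum_eq, Matrix.sum_mul]
  refine Finset.sum_congr rfl fun l _ => ?_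
  rw [kron_mul]
  refine congrArg kron (funext fun j => ?_)
  by_cases h : j = l
  · subst h; rw [Function.update_self, Function.update_self]
  · rw [Function.update_of_ne h, Function.update_of_ne h, Matrix.one_mul]

lemma h2 (hV : ∀ j, (V j)ᴴ * V j = 1) (l : Fin d) :
    kron (Gfam n m V i) * kron (Function.update V l (A l * V l)) =
      if i = l then kron (Function.update V l (A l * V l))
      else bigKron V * Tt n m A V l := by
  by_cases hil : i = l
  · subst hil
    rw [if_pos rfl, kron_mul]
    refine congrArg kron (funext fun j => ?_)
    by_cases h : j = i
    · subst h; simp [Gfam]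
    · rw [Function.update_of_ne h]
      simp only [Gfam, if_neg h]
      rw [Matrix.mul_assoc, hV j, Matrix.mul_one]
  · rw [if_neg hil]
    show _ = kron V * Tt n m A V l
    rw [Tt, kron_mul, kron_mul]
    refine congrArg kron (funext fun j => ?_)
    by_cases h : j = l
    · subst h
      rw [Function.update_self, Function.update_self]
      simp only [Gfam, if_neg (fun hh : j = i => hil hh.symm)]
      simp only [Matrix.mul_assoc]
    · rw [Function.update_of_ne h, Function.update_of_ne h, Matrix.mul_one]
      by_cases hji : j = i
      · subst hji; simp [Gfam]
      · simp only [Gfam, if_neg hji]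
        rw [Matrix.mul_assoc, hV j, Matrix.mul_one]

lemma hVV (hV : ∀ j, (V j)ᴴ * V j = 1) : (bigKron V)ᴴ * bigKron V = 1 := by
  show (kron V)ᴴ * kron V = 1
  rw [kron_conjTranspose, kron_mul, ← kron_one]
  exact congrArg kron (funext hV)

lemma sum_mulVec {ι α β : Type*} [Fintype β] [DecidableEq β] (s : Finset ι)
    (M : ι → Matrix α β ℂ) (v : β → ℂ) :
    (∑ i ∈ s, M i) *ᵥ v = ∑ i ∈ s, M i *ᵥ v := by
  ext x
  simp only [Matrix.mulVec, dotProduct, Finset.sum_apply, Matrix.sum_apply, Finset.sum_mul]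
  rw [Finset.sum_comm]

lemma dot_sum {ι α : Type*} [Fintype α] (v : α → ℂ) (s : Finset ι) (w : ι → α → ℂ) :
    v ⬝ᵥ (∑ i ∈ s, w i) = ∑ i ∈ s, v ⬝ᵥ w i := by
  simp only [dotProduct, Finset.sum_apply, Finset.mul_sum]
  rw [Finset.sum_comm]

end Stmt4Aux

/-- If `c` lies in the column space of `𝐕 = V_d ⊗ ⋯ ⊗ V₁`, then
`(∏ᵢ (I - V̄ᵢV̄ᵢᴴ)) c = 0` and `‖r‖₂² = Σᵢ ‖V̄ᵢᴴ r‖₂²`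
(squared norms written as `star x ⬝ᵥ x`). -/
theorem stmt_4 {d : ℕ} (n m : Fin d → ℕ)
    (A : ∀ i, Matrix (Fin (n i)) (Fin (n i)) ℂ)
    (V : ∀ i, Matrix (Fin (n i)) (Fin (m i)) ℂ)
    (hV : ∀ i, (V i)ᴴ * V i = 1)
    (c : (∀ j, Fin (n j)) → ℂ)
    (hAt : IsUnit (kronSum m fun i => (V i)ᴴ * A i * V i))
    (y : (∀ j, Fin (m j)) → ℂ)
    (hy : (kronSum m fun i => (V i)ᴴ * A i * V i) *ᵥ y = (bigKron V)ᴴ *ᵥ c)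
    (hc : ∃ z, c = bigKron V *ᵥ z) :
    ((List.finRange d).map fun l => 1 - VbarM n m V l * (VbarM n m V l)ᴴ).prod *ᵥ c = 0
    ∧ star (c - kronSum n A *ᵥ (bigKron V *ᵥ y))
          ⬝ᵥ (c - kronSum n A *ᵥ (bigKron V *ᵥ y))
      = ∑ i, star ((VbarM n m V i)ᴴ *ᵥ (c - kronSum n A *ᵥ (bigKron V *ᵥ y)))
          ⬝ᵥ ((VbarM n m V i)ᴴ *ᵥ (c - kronSum n A *ᵥ (bigKron V *ᵥ y))) := by
  classical
  obtain ⟨z, hz⟩ := hc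
  rcases Nat.eq_zero_or_pos d with hd0 | hdpos
  · exfalso
    subst hd0
    have h0 : (kronSum m fun i => (V i)ᴴ * A i * V i) = 0 := by
      unfold kronSum; simp
    rw [h0, isUnit_zero_iff] at hAt
    have h1 := congrFun (congrFun hAt (fun j => j.elim0)) (fun j => j.elim0)
    simp [Matrix.one_apply] at h1
  obtain ⟨k, rfl⟩ : ∃ k, d = k + 1 := ⟨d - 1, (Nat.succ_pred_eq_of_pos hdpos).symm⟩
  set w : (∀ j, Fin (n j)) → ℂ := kronSum n A *ᵥ (bigKron V *ᵥ y) with hw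
  set r : (∀ j, Fin (n j)) → ℂ := c - w with hrdef
  have hPc : ∀ i, Stmt4Aux.kron (Stmt4Aux.Gfam n m V i) *ᵥ c = c := fun i => by
    rw [hz, Matrix.mulVec_mulVec, Stmt4Aux.h1 n m V i hV]
  have hPVb : ∀ l, VbarM n m V l * (VbarM n m V l)ᴴ
      = Stmt4Aux.kron (Stmt4Aux.Gfam n m V l) := fun l => Stmt4Aux.P_eq n m V l
  have hfac : ∀ l, (1 - VbarM n m V l * (VbarM n m V l)ᴴ) *ᵥ c = 0 := fun l => by
    rw [Matrix.sub_mulVec, Matrix.one_mulVec, hPVb, hPc, sub_self]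
  constructor
  · have hne : ((List.finRange (k+1)).map
        fun l => 1 - VbarM n m V l * (VbarM n m V l)ᴴ) ≠ [] := by
      intro hcon
      have := congrArg List.length hcon
      simp at this
    conv_lhs => rw [← List.dropLast_append_getLast hne]
    rw [List.prod_append, List.prod_cons, List.prod_nil, mul_one, ← Matrix.mulVec_mulVec]
    obtain ⟨a, -, ha⟩ := List.mem_map.mp (List.getLast_mem hne)
    have h0 : (((List.finRange (k+1)).map
        fun l => 1 - VbarM n m V l * (VbarM n m V l)ᴴ).getLast hne) *ᵥ c = 0 := by
      rw [← ha]; exact hfac a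
    rw [h0, Matrix.mulVec_zero]
  · have hVAty : bigKron V *ᵥ ((kronSum m fun i => (V i)ᴴ * A i * V i) *ᵥ y) = c := by
      rw [hy, hz, Matrix.mulVec_mulVec, Matrix.mulVec_mulVec, Matrix.mul_assoc,
        Stmt4Aux.hVV n m V hV, Matrix.mul_one]
    have hPw : ∀ i, Stmt4Aux.kron (Stmt4Aux.Gfam n m V i) *ᵥ w =
        Stmt4Aux.kron (Function.update V i (A i * V i)) *ᵥ y
          + ∑ l ∈ Finset.univ.erase i, (bigKron V * Stmt4Aux.Tt n m A V l) *ᵥ y := by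
      intro i
      rw [hw, Matrix.mulVec_mulVec, Matrix.mulVec_mulVec, Matrix.mul_assoc,
        Stmt4Aux.hAV n m A V,
        Matrix.mul_sum,
        ← Finset.add_sum_erase Finset.univ
          (fun l => Stmt4Aux.kron (Stmt4Aux.Gfam n m V i)
            * Stmt4Aux.kron (Function.update V l (A l * V l)))
          (Finset.mem_univ i),
        Stmt4Aux.h2 n m A V i hV i, if_pos rfl, Matrix.add_mulVec, Stmt4Aux.sum_mulVec]
      congr 1
      refine Finset.sum_congr rfl fun l hl => ?_
      rw [Stmt4Aux.h2 n m A V i hV l,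
        if_neg (fun hh => (Finset.ne_of_mem_erase hl) hh.symm)]
    have hTt : ∑ l, Stmt4Aux.Tt n m A V l = kronSum m (fun i => (V i)ᴴ * A i * V i) :=
      (Stmt4Aux.kronSum_eq m fun i => (V i)ᴴ * A i * V i).symm
    have hsum : ∑ i, Stmt4Aux.kron (Stmt4Aux.Gfam n m V i) *ᵥ r = r := by
      have step : ∀ i : Fin (k+1), Stmt4Aux.kron (Stmt4Aux.Gfam n m V i) *ᵥ r
          = c - (Stmt4Aux.kron (Function.update V i (A i * V i)) *ᵥ y
            + ∑ l ∈ Finset.univ.erase i, (bigKron V * Stmt4Aux.Tt n m A V l) *ᵥ y) := by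
        intro i; rw [hrdef, Matrix.mulVec_sub, hPc, hPw]
      rw [Finset.sum_congr rfl fun i _ => step i, Finset.sum_sub_distrib,
        Finset.sum_add_distrib, Finset.sum_const, Finset.card_univ, Fintype.card_fin]
      have e1 : ∑ i : Fin (k+1), Stmt4Aux.kron (Function.update V i (A i * V i)) *ᵥ y
          = w := by
        rw [← Stmt4Aux.sum_mulVec, ← Stmt4Aux.hAV n m A V, ← Matrix.mulVec_mulVec, hw]
      have hcomm : ∀ (x y : Fin (k+1)),
          x ∈ Finset.univ ∧ y ∈ Finset.univ.erase x
            ↔ x ∈ Finset.univ.erase y ∧ y ∈ Finset.univ := by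
        intro x y; simp [Finset.mem_erase]; exact ne_comm
      have e2 : ∑ i : Fin (k+1), ∑ l ∈ Finset.univ.erase i,
          (bigKron V * Stmt4Aux.Tt n m A V l) *ᵥ y = k • c := by
        rw [Finset.sum_comm' hcomm]
        have hcard : ∀ l : Fin (k+1), ∑ _x ∈ Finset.univ.erase l,
            (bigKron V * Stmt4Aux.Tt n m A V l) *ᵥ y
            = k • ((bigKron V * Stmt4Aux.Tt n m A V l) *ᵥ y) := by
          intro l
          rw [Finset.sum_const, Finset.card_erase_of_mem (Finset.mem_univ l),
            Finset.card_univ, Fintype.card_fin, Nat.add_sub_cancel]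
        rw [Finset.sum_congr rfl fun l _ => hcard l, ← Finset.smul_sum,
          ← Stmt4Aux.sum_mulVec, ← Matrix.mul_sum, hTt, ← Matrix.mulVec_mulVec, hVAty]
      rw [e1, e2, hrdef, succ_nsmul]
      abel
    calc star r ⬝ᵥ r
        = star r ⬝ᵥ (∑ i, Stmt4Aux.kron (Stmt4Aux.Gfam n m V i) *ᵥ r) := by rw [hsum]
      _ = ∑ i, star r ⬝ᵥ (Stmt4Aux.kron (Stmt4Aux.Gfam n m V i) *ᵥ r) :=
          Stmt4Aux.dot_sum _ _ _
      _ = ∑ i, star ((VbarM n m V i)ᴴ *ᵥ r) ⬝ᵥ ((VbarM n m V i)ᴴ *ᵥ r) := by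
          refine Finset.sum_congr rfl fun i _ => ?_
          conv_rhs => rw [Matrix.star_mulVec, Matrix.conjTranspose_conjTranspose,
            ← Matrix.dotProduct_mulVec, Matrix.mulVec_mulVec, hPVb i]
end

section
/- Let A ∈ ℂ^{n×n}, B ∈ ℂ^{m×m}, C ∈ ℂ^{n×b}, Z ∈ ℂ^{m×b}. Let V_{h+1} ∈ ℂ^{n×b(h+1)} have orthonormal columns, let V_h consist of its first bh columns and v_{h+1} of its last b columns, and let H̲_h ∈ ℂ^{b(h+1)×bh} and an invertible K_h ∈ ℂ^{bh×bh} satisfy A V_h = V_{h+1} H̲_h K_h^{-1}. Assume furthermore V_h V_h^H C = C. Let Y solve the projected Sylvester equation (V_h^H A V_h)Y + YB − V_h^H C Z^H = 0, and define the residual ρ_h := A V_h Y + V_h Y B − C Z^H. Then ρ_h = v_{h+1} · (e_{h+1}^H H̲_h K_h^{-1} Y), where e_{h+1}^H := [0 ⋯ 0 I_b] ∈ ℂ^{b×b(h+1)} selects the last b rows, and consequently ‖ρ_h‖_F = ‖e_{h+1}^H H̲_h K_h^{-1} Y‖_F. -/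
/-!
Write `H̲_h K_h⁻¹` as the block rows `F` (first `bh` rows) over `G` (last `b` rows), so that
`A V_h = V_h F + v_{h+1} G`. Orthonormality of `V_{h+1}` turns this into `V_hᴴ A V_h = F`, so the
projected Sylvester equation says exactly that the `V_h`-component `F Y + Y B - V_hᴴ C Zᴴ` of the
residual vanishes (here `V_h V_hᴴ C = C` is used), leaving `ρ_h = v_{h+1} G Y`. Multiplying by
`v_{h+1}`, which has orthonormal columns, preserves the Frobenius norm.
-/

open Matrix

/-- The first `bh` columns of `V ∈ ℂ^{n×b(h+1)}` (columns indexed blockwise). -/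
def firstCols {n h b : ℕ} (V : Matrix (Fin n) (Fin (h + 1) × Fin b) ℂ) :
    Matrix (Fin n) (Fin h × Fin b) ℂ :=
  Matrix.of fun p q => V p (q.1.castSucc, q.2)

/-- The last `b` columns of `V ∈ ℂ^{n×b(h+1)}`. -/
def lastCols {n h b : ℕ} (V : Matrix (Fin n) (Fin (h + 1) × Fin b) ℂ) :
    Matrix (Fin n) (Fin b) ℂ :=
  Matrix.of fun p l => V p (Fin.last h, l)

/-- The last `b` rows of `H ∈ ℂ^{b(h+1)×κ}`, i.e. `e_{h+1}ᴴ H`. -/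
def lastRows {h b : ℕ} {κ : Type} (H : Matrix (Fin (h + 1) × Fin b) κ ℂ) :
    Matrix (Fin b) κ ℂ :=
  Matrix.of fun l q => H (Fin.last h, l) q

def firstRows {h b : ℕ} {κ : Type} (H : Matrix (Fin (h + 1) × Fin b) κ ℂ) :
    Matrix (Fin h × Fin b) κ ℂ :=
  Matrix.of fun q j => H (q.1.castSucc, q.2) j

section Residual

variable {R : Type*} [Ring R] {n m k b p : Type*} [Fintype n] [Fintype m] [Fintype k]
  [Fintype b] [Fintype p] [DecidableEq k]

theorem residual_eq_of_projected_sylvester (A : Matrix n n R) (B : Matrix m m R)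
    (C : Matrix n p R) (D : Matrix p m R) (W : Matrix k n R) (U : Matrix n k R)
    (v : Matrix n b R) (F : Matrix k k R) (G : Matrix b k R) (Y : Matrix k m R)
    (hWU : W * U = 1) (hWv : W * v = 0) (hAU : A * U = U * F + v * G) (hC : U * W * C = C)
    (hY : W * A * U * Y + Y * B - W * C * D = 0) :
    A * U * Y + U * Y * B - C * D = v * (G * Y) := by
  have hproj : W * A * U = F := by
    rw [Matrix.mul_assoc, hAU, Matrix.mul_add, ← Matrix.mul_assoc, ← Matrix.mul_assoc, hWU, hWv,
      Matrix.one_mul, Matrix.zero_mul, add_zero]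
  calc A * U * Y + U * Y * B - C * D
      = (U * F + v * G) * Y + U * Y * B - U * W * C * D := by rw [← hAU, hC]
    _ = U * (W * A * U * Y + Y * B - W * C * D) + v * (G * Y) := by
      simp only [hproj, Matrix.add_mul, Matrix.mul_add, Matrix.mul_sub, Matrix.mul_assoc]
      abel
    _ = v * (G * Y) := by rw [hY, Matrix.mul_zero, zero_add]

end Residual

theorem conjTranspose_submatrix_mul_submatrix {α : Type*} [Star α] [Mul α] [AddCommMonoid α]
    {n k ι κ : Type*} [Fintype n] (V : Matrix n k α) (f : ι → k) (g : κ → k) :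
    (V.submatrix id f)ᴴ * V.submatrix id g = (Vᴴ * V).submatrix f g := by
  rw [conjTranspose_submatrix, submatrix_mul _ _ _ _ _ Function.bijective_id]

theorem sum_norm_sq_eq_re_conjTranspose_mul_self {𝕜 : Type*} [RCLike 𝕜] {ι κ : Type*}
    [Fintype ι] (X : Matrix ι κ 𝕜) (q : κ) :
    ∑ p, ‖X p q‖ ^ 2 = RCLike.re ((Xᴴ * X) q q) := by
  simp only [Matrix.mul_apply, conjTranspose_apply, RCLike.star_def, RCLike.conj_mul, map_sum]
  exact Finset.sum_congr rfl fun p _ => by rw [← RCLike.ofReal_pow, RCLike.ofReal_re]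

theorem sum_sum_norm_sq_mul_of_conjTranspose_mul_self_eq_one {𝕜 : Type*} [RCLike 𝕜]
    {ι β κ : Type*} [Fintype ι] [Fintype β] [Fintype κ] [DecidableEq β]
    {v : Matrix ι β 𝕜} (hv : vᴴ * v = 1) (X : Matrix β κ 𝕜) :
    ∑ p, ∑ q, ‖(v * X) p q‖ ^ 2 = ∑ l, ∑ q, ‖X l q‖ ^ 2 := by
  rw [Finset.sum_comm, Finset.sum_comm (γ := β)]
  refine Finset.sum_congr rfl fun q _ => ?_
  rw [sum_norm_sq_eq_re_conjTranspose_mul_self, sum_norm_sq_eq_re_conjTranspose_mul_self,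
    conjTranspose_mul, Matrix.mul_assoc, ← Matrix.mul_assoc vᴴ, hv, Matrix.one_mul]

section Blocks

variable {n h b : ℕ}

theorem firstCols_eq_submatrix (V : Matrix (Fin n) (Fin (h + 1) × Fin b) ℂ) :
    firstCols V = V.submatrix id (Prod.map Fin.castSucc id) :=
  rfl

theorem lastCols_eq_submatrix (V : Matrix (Fin n) (Fin (h + 1) × Fin b) ℂ) :
    lastCols V = V.submatrix id (Prod.mk (Fin.last h)) :=
  rfl

variable {V : Matrix (Fin n) (Fin (h + 1) × Fin b) ℂ}

theorem conjTranspose_firstCols_mul_firstCols (hV : Vᴴ * V = 1) :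
    (firstCols V)ᴴ * firstCols V = 1 := by
  rw [firstCols_eq_submatrix, conjTranspose_submatrix_mul_submatrix, hV,
    submatrix_one _ (Fin.castSucc_injective h |>.prodMap Function.injective_id)]

theorem conjTranspose_firstCols_mul_lastCols (hV : Vᴴ * V = 1) :
    (firstCols V)ᴴ * lastCols V = 0 := by
  ext q l
  rw [firstCols_eq_submatrix, lastCols_eq_submatrix, conjTranspose_submatrix_mul_submatrix, hV]
  simp [one_apply, Prod.ext_iff, Fin.castSucc_ne_last]

theorem conjTranspose_lastCols_mul_lastCols (hV : Vᴴ * V = 1) :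
    (lastCols V)ᴴ * lastCols V = 1 := by
  rw [lastCols_eq_submatrix, conjTranspose_submatrix_mul_submatrix, hV,
    submatrix_one _ (Prod.mk_right_injective _)]

theorem firstCols_mul_firstRows_add_lastCols_mul_lastRows {κ : Type} [Fintype κ]
    (P : Matrix (Fin n) (Fin (h + 1) × Fin b) ℂ) (M : Matrix (Fin (h + 1) × Fin b) κ ℂ) :
    firstCols P * firstRows M + lastCols P * lastRows M = P * M := by
  ext p j
  symm
  simp only [Matrix.mul_apply, Matrix.add_apply, firstCols, firstRows, lastCols, lastRows,
    Matrix.of_apply]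
  rw [Fintype.sum_prod_type, Fin.sum_univ_castSucc, Fintype.sum_prod_type]

theorem lastRows_mul {κ κ' : Type} [Fintype κ] (H : Matrix (Fin (h + 1) × Fin b) κ ℂ)
    (M : Matrix κ κ' ℂ) : lastRows (H * M) = lastRows H * M := by
  ext l j
  simp [lastRows, Matrix.mul_apply]

end Blocks

theorem stmt_5_general {n m b h : ℕ}
    (A : Matrix (Fin n) (Fin n) ℂ) (B : Matrix (Fin m) (Fin m) ℂ)
    (Cblk : Matrix (Fin n) (Fin b) ℂ) (Z : Matrix (Fin m) (Fin b) ℂ)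
    (V : Matrix (Fin n) (Fin (h + 1) × Fin b) ℂ)
    (hVorth : Vᴴ * V = 1)
    (Hu : Matrix (Fin (h + 1) × Fin b) (Fin h × Fin b) ℂ)
    (K : Matrix (Fin h × Fin b) (Fin h × Fin b) ℂ)
    (hAV : A * firstCols V = V * Hu * K⁻¹)
    (hC : firstCols V * (firstCols V)ᴴ * Cblk = Cblk)
    (Y : Matrix (Fin h × Fin b) (Fin m) ℂ)
    (hY : ((firstCols V)ᴴ * A * firstCols V) * Y + Y * B
            - (firstCols V)ᴴ * Cblk * Zᴴ = 0) :
    A * firstCols V * Y + firstCols V * Y * B - Cblk * Zᴴ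
      = lastCols V * (lastRows Hu * K⁻¹ * Y)
    ∧ Real.sqrt (∑ p, ∑ q,
        ‖(A * firstCols V * Y + firstCols V * Y * B - Cblk * Zᴴ) p q‖ ^ 2)
      = Real.sqrt (∑ l, ∑ q, ‖(lastRows Hu * K⁻¹ * Y) l q‖ ^ 2) := by
  have hsplit : A * firstCols V
      = firstCols V * firstRows (Hu * K⁻¹) + lastCols V * lastRows (Hu * K⁻¹) := by
    rw [hAV, Matrix.mul_assoc, firstCols_mul_firstRows_add_lastCols_mul_lastRows]
  have hres := residual_eq_of_projected_sylvester A B Cblk Zᴴ _ _ _ _ _ Y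
    (conjTranspose_firstCols_mul_firstCols hVorth) (conjTranspose_firstCols_mul_lastCols hVorth)
    hsplit hC hY
  rw [lastRows_mul] at hres
  refine ⟨hres, ?_⟩
  rw [hres, sum_sum_norm_sq_mul_of_conjTranspose_mul_self_eq_one
    (conjTranspose_lastCols_mul_lastCols hVorth)]

/-- Cheap residual formula: with `V_{h+1}` orthonormal,
`A V_h = V_{h+1} H̲_h K_h⁻¹`, `V_h V_hᴴ C = C`, and `Y` solving the projected
Sylvester equation, the residual `ρ_h = A V_h Y + V_h Y B - C Zᴴ` equals
`v_{h+1} · (e_{h+1}ᴴ H̲_h K_h⁻¹ Y)`, and consequently the Frobenius norms agree: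
`‖ρ_h‖_F = ‖e_{h+1}ᴴ H̲_h K_h⁻¹ Y‖_F`. -/
theorem stmt_5 {n m b h : ℕ}
    (A : Matrix (Fin n) (Fin n) ℂ) (B : Matrix (Fin m) (Fin m) ℂ)
    (Cblk : Matrix (Fin n) (Fin b) ℂ) (Z : Matrix (Fin m) (Fin b) ℂ)
    (V : Matrix (Fin n) (Fin (h + 1) × Fin b) ℂ)
    (hVorth : Vᴴ * V = 1)
    (Hu : Matrix (Fin (h + 1) × Fin b) (Fin h × Fin b) ℂ)
    (K : Matrix (Fin h × Fin b) (Fin h × Fin b) ℂ)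
    (hK : IsUnit K)
    (hAV : A * firstCols V = V * Hu * K⁻¹)
    (hC : firstCols V * (firstCols V)ᴴ * Cblk = Cblk)
    (Y : Matrix (Fin h × Fin b) (Fin m) ℂ)
    (hY : ((firstCols V)ᴴ * A * firstCols V) * Y + Y * B
            - (firstCols V)ᴴ * Cblk * Zᴴ = 0) :
    A * firstCols V * Y + firstCols V * Y * B - Cblk * Zᴴ
      = lastCols V * (lastRows Hu * K⁻¹ * Y)
    ∧ Real.sqrt (∑ p, ∑ q,
        ‖(A * firstCols V * Y + firstCols V * Y * B - Cblk * Zᴴ) p q‖ ^ 2)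
      = Real.sqrt (∑ l, ∑ q, ‖(lastRows Hu * K⁻¹ * Y) l q‖ ^ 2) :=
  stmt_5_general A B Cblk Z V hVorth Hu K hAV hC Y hY
end

section
/- For i = 1,…,d let A_i ∈ ℂ^{n_i×n_i}, and let 𝐀 := Σ_{i=1}^d I_{n_d}⊗⋯⊗I_{n_{i+1}}⊗A_i⊗I_{n_{i−1}}⊗⋯⊗I_{n_1} be their Kronecker sum. Then the field of values of 𝐀 equals the Minkowski sum of the fields of values of the A_i: 𝕎(𝐀) = 𝕎(A_1) + 𝕎(A_2) + ⋯ + 𝕎(A_d). -/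
open Matrix

/-- The field of values (numerical range) `𝕎(A) = {xᴴAx : xᴴx = 1}`. -/
def fov {ι : Type} [Fintype ι] (A : Matrix ι ι ℂ) : Set ℂ :=
  { c | ∃ x : ι → ℂ, star x ⬝ᵥ x = 1 ∧ c = star x ⬝ᵥ (A *ᵥ x) }

/-!
By the Toeplitz–Hausdorff theorem every field of values is convex. For a unit vector `x` on the
product index set, the `j`-th summand of the Kronecker sum contributes `Σᵣ xᵣᴴ Aⱼ xᵣ`, where the
`xᵣ` are the slices of `x` along the `j`-th factor. As `Σᵣ xᵣᴴ xᵣ = 1`, this is a convex combination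
of Rayleigh quotients of `Aⱼ`, hence lies in `𝕎(Aⱼ)`. Conversely, if unit vectors `xᵢ` realise
`sᵢ ∈ 𝕎(Aᵢ)`, their tensor product is a unit vector realising `Σᵢ sᵢ` for the Kronecker sum.

Convexity is proved by normalising two points of `𝕎(A)` to `0` and `1`, realised by unit vectors
`y` and `x`; along a path `s x + (1 - s) u y`, with a phase `u` making the form real, the Rayleigh
quotient moves continuously from `0` to `1`.
-/

open Complex
open scoped Kronecker

lemma dotProduct_eq_sum_dotProduct_prod {R m n : Type*} [AddCommMonoid R] [Mul R] [Fintype m]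
    [Fintype n] (u v : m × n → R) :
    u ⬝ᵥ v = ∑ s, (fun a => u (a, s)) ⬝ᵥ (fun a => v (a, s)) := by
  simp only [dotProduct, Fintype.sum_prod_type]
  exact Finset.sum_comm

lemma kronecker_one_mulVec_apply {R m n : Type*} [NonAssocSemiring R] [Fintype m] [Fintype n]
    [DecidableEq n] (B : Matrix m m R) (y : m × n → R) (a : m) (s : n) :
    ((B ⊗ₖ (1 : Matrix n n R)) *ᵥ y) (a, s) = (B *ᵥ fun b => y (b, s)) a := by
  simp [mulVec, dotProduct, Fintype.sum_prod_type, one_apply]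

lemma star_dotProduct_kronecker_one_mulVec {R m n : Type*} [NonAssocSemiring R] [Star R]
    [Fintype m] [Fintype n] [DecidableEq n] (B : Matrix m m R) (y : m × n → R) :
    star y ⬝ᵥ ((B ⊗ₖ (1 : Matrix n n R)) *ᵥ y) =
      ∑ s, star (fun a => y (a, s)) ⬝ᵥ (B *ᵥ fun a => y (a, s)) := by
  rw [dotProduct_eq_sum_dotProduct_prod]
  simp only [kronecker_one_mulVec_apply]
  rfl

section StarDotProduct

variable {R m : Type*} [CommSemiring R] [StarRing R] [Fintype m]

lemma star_smul_dotProduct_smul (c : R) (x y : m → R) :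
    star (c • x) ⬝ᵥ (c • y) = star c * c * (star x ⬝ᵥ y) := by
  simp only [star_smul, smul_dotProduct, dotProduct_smul, smul_eq_mul]
  ring

lemma star_add_dotProduct_mulVec_add (A : Matrix m m R) (c e : R) (x y : m → R) :
    star (c • x + e • y) ⬝ᵥ (A *ᵥ (c • x + e • y)) =
      star c * c * (star x ⬝ᵥ (A *ᵥ x)) + star e * e * (star y ⬝ᵥ (A *ᵥ y))
        + star c * e * (star x ⬝ᵥ (A *ᵥ y)) + star e * c * (star y ⬝ᵥ (A *ᵥ x)) := by
  simp only [star_add, star_smul, mulVec_add, mulVec_smul, add_dotProduct, dotProduct_add,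
    smul_dotProduct, dotProduct_smul, smul_eq_mul]
  ring

end StarDotProduct

def kronVec {ι : Type*} [Fintype ι] {κ : ι → Type*} {R : Type*} [CommMonoid R]
    (x : ∀ i, κ i → R) : (∀ i, κ i) → R :=
  fun p => ∏ i, x i (p i)

section TensorFactors

variable {ι : Type*} [DecidableEq ι] {κ : ι → Type*}

def slice {α : Type*} (j : ι) (x : (∀ i, κ i) → α) (r : ∀ l : {l // l ≠ j}, κ l) : κ j → α :=
  fun a => x ((Equiv.piSplitAt j κ).symm (a, r))

variable [Fintype ι] {R : Type*}

lemma slice_kronVec [CommMonoid R] (j : ι) (x : ∀ i, κ i → R) (r : ∀ l : {l // l ≠ j}, κ l) :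
    slice j (kronVec x) r = kronVec (fun l : {l // l ≠ j} => x l) r • x j := by
  funext a
  simp only [slice, kronVec, Fintype.prod_eq_mul_prod_subtype_ne _ j, Equiv.piSplitAt_symm_apply,
    dif_pos, Pi.smul_apply, smul_eq_mul, mul_comm]
  congr 1
  exact Finset.prod_congr rfl fun l _ => by rw [dif_neg l.2]

variable [CommSemiring R]

/-- `I ⊗ ⋯ ⊗ I ⊗ B ⊗ I ⊗ ⋯ ⊗ I`, with `B` acting on the `j`-th tensor factor. -/
def kronAt [∀ i, DecidableEq (κ i)] (j : ι) (B : Matrix (κ j) (κ j) R) :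
    Matrix (∀ i, κ i) (∀ i, κ i) R :=
  Matrix.of fun p q => B (p j) (q j) * ∏ l ∈ Finset.univ.erase j, if p l = q l then 1 else 0

lemma kronAt_eq_submatrix [∀ i, DecidableEq (κ i)] (j : ι) (B : Matrix (κ j) (κ j) R) :
    kronAt j B = (B ⊗ₖ (1 : Matrix _ _ R)).submatrix (Equiv.piSplitAt j κ)
      (Equiv.piSplitAt j κ) := by
  ext p q
  simp [kronAt, one_apply, Finset.prod_boole, funext_iff]

variable [StarRing R] [∀ i, Fintype (κ i)]

lemma star_dotProduct_self_eq_sum_slice (j : ι) (x : (∀ i, κ i) → R) :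
    star x ⬝ᵥ x = ∑ r, star (slice j x r) ⬝ᵥ slice j x r := by
  have h := comp_equiv_symm_dotProduct (star x) (x ∘ (Equiv.piSplitAt j κ).symm)
    (Equiv.piSplitAt j κ)
  rw [Function.comp_assoc, Equiv.symm_comp_self, Function.comp_id] at h
  rw [← h, dotProduct_eq_sum_dotProduct_prod]
  rfl

lemma star_dotProduct_kronAt_mulVec [∀ i, DecidableEq (κ i)] (j : ι) (B : Matrix (κ j) (κ j) R)
    (x : (∀ i, κ i) → R) :
    star x ⬝ᵥ (kronAt j B *ᵥ x) = ∑ r, star (slice j x r) ⬝ᵥ (B *ᵥ slice j x r) := by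
  rw [kronAt_eq_submatrix, submatrix_mulVec_equiv, ← comp_equiv_symm_dotProduct]
  exact star_dotProduct_kronecker_one_mulVec B (x ∘ (Equiv.piSplitAt j κ).symm)

lemma star_kronVec_dotProduct_kronVec (x y : ∀ i, κ i → R) :
    star (kronVec x) ⬝ᵥ kronVec y = ∏ i, star (x i) ⬝ᵥ y i := by
  simp only [dotProduct, kronVec, Pi.star_apply, star_prod, ← Finset.prod_mul_distrib]
  exact (Fintype.prod_sum fun i a => star (x i a) * y i a).symm

lemma star_kronVec_dotProduct_kronAt_mulVec [∀ i, DecidableEq (κ i)] (j : ι)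
    (B : Matrix (κ j) (κ j) R) (x : ∀ i, κ i → R) :
    star (kronVec x) ⬝ᵥ (kronAt j B *ᵥ kronVec x) =
      (∏ l : {l // l ≠ j}, star (x l) ⬝ᵥ x l) * (star (x j) ⬝ᵥ (B *ᵥ x j)) := by
  simp only [star_dotProduct_kronAt_mulVec, slice_kronVec, mulVec_smul, star_smul_dotProduct_smul,
    ← Finset.sum_mul]
  rw [← star_kronVec_dotProduct_kronVec]
  rfl

end TensorFactors

section FieldOfValues

variable {ι : Type} [Fintype ι]

open ComplexOrder in
lemma ofReal_re_star_dotProduct_self (x : ι → ℂ) :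
    ((star x ⬝ᵥ x).re : ℂ) = star x ⬝ᵥ x :=
  Complex.ext rfl <| by rw [ofReal_im, (Complex.nonneg_iff.mp (dotProduct_star_self_nonneg x)).2]

open ComplexOrder in
lemma div_star_dotProduct_self_mem_fov (A : Matrix ι ι ℂ) {z : ι → ℂ} (hz : z ≠ 0) :
    star z ⬝ᵥ (A *ᵥ z) / star z ⬝ᵥ z ∈ fov A := by
  set N := (star z ⬝ᵥ z).re
  have hN : 0 < N := (Complex.pos_iff.mp (dotProduct_star_self_pos_iff.mpr hz)).1
  have hc : star ((√N : ℂ)⁻¹) * (√N : ℂ)⁻¹ = (star z ⬝ᵥ z)⁻¹ := by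
    rw [← ofReal_re_star_dotProduct_self, ← ofReal_inv, star_def, conj_ofReal, ← ofReal_mul,
      ← mul_inv, Real.mul_self_sqrt hN.le, ofReal_inv]
  refine ⟨(√N : ℂ)⁻¹ • z, ?_, ?_⟩
  · rw [star_smul_dotProduct_smul, hc, inv_mul_cancel₀ (dotProduct_star_self_eq_zero.not.mpr hz)]
  · rw [mulVec_smul, star_smul_dotProduct_smul, hc, inv_mul_eq_div]

lemma exists_ne_zero_im_mul_eq_zero (c : ℂ) : ∃ u : ℂ, u ≠ 0 ∧ (u * c).im = 0 := by
  rcases eq_or_ne c 0 with rfl | hc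
  · exact ⟨1, one_ne_zero, by simp⟩
  · exact ⟨star c, star_ne_zero.mpr hc, by rw [star_def, conj_mul']; norm_cast⟩

open ComplexOrder in
lemma ofReal_mem_fov_of_zero_mem_of_one_mem {B : Matrix ι ι ℂ} (h0 : (0 : ℂ) ∈ fov B)
    (h1 : (1 : ℂ) ∈ fov B) {t : ℝ} (ht : t ∈ Set.Icc (0 : ℝ) 1) : (t : ℂ) ∈ fov B := by
  obtain ⟨y, hy, hBy⟩ := h0
  obtain ⟨x, hx, hBx⟩ := h1
  -- the phase `u` cancels the imaginary part of the cross terms of the form along `z`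
  obtain ⟨u, hu0, hu⟩ :=
    exists_ne_zero_im_mul_eq_zero (star x ⬝ᵥ (B *ᵥ y) - star (star y ⬝ᵥ (B *ᵥ x)))
  set z : ℝ → ι → ℂ := fun s => (s : ℂ) • x + ((1 - s : ℂ) * u) • y with hz_def
  have hz : ∀ s, z s ≠ 0 := by
    intro s hs
    have hsx : (s : ℂ) • x = (-((1 - s : ℂ) * u)) • y := by
      rw [neg_smul, eq_neg_iff_add_eq_zero]
      exact hs
    have hss : star (s : ℂ) * s = 0 := by
      simpa only [mulVec_smul, star_smul_dotProduct_smul, ← hBx, ← hBy, mul_one, mul_zero]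
        using congrArg (fun v => star v ⬝ᵥ (B *ᵥ v)) hsx
    have hs0 : s = 0 := by simpa using hss
    have hy0 : y = 0 := by simpa [hz_def, hs0, hu0] using hs
    simp [hy0] at hy
  have him : ∀ s, (star (z s) ⬝ᵥ (B *ᵥ z s)).im = 0 := by
    intro s
    rw [hz_def, star_add_dotProduct_mulVec_add, ← hBx, ← hBy]
    simp only [Complex.add_im, Complex.mul_im, Complex.sub_im, Complex.sub_re, Complex.mul_re,
      star_def, conj_re, conj_im, ofReal_re, ofReal_im, Complex.one_re, Complex.one_im,
      Complex.zero_re, Complex.zero_im] at hu ⊢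
    linear_combination (s * (1 - s)) * hu
  set F : ℝ → ℂ := fun s => star (z s) ⬝ᵥ (B *ᵥ z s) / star (z s) ⬝ᵥ z s
  have hF_real : ∀ s, ((F s).re : ℂ) = F s := fun s =>
    Complex.ext rfl <| by
      change 0 = (_ / _ : ℂ).im
      rw [← ofReal_re_star_dotProduct_self, div_ofReal_im, him, zero_div]
  have hF0 : F 0 = 0 := by
    simp only [F, hz_def, ofReal_zero, zero_smul, zero_add, sub_zero, one_mul, mulVec_smul,
      star_smul_dotProduct_smul, ← hBy, mul_zero, zero_div]
  have hF1 : F 1 = 1 := by simp [F, hz_def, ← hBx, hx]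
  have hcont : Continuous fun s => (F s).re :=
    continuous_re.comp <| Continuous.div (by fun_prop) (by fun_prop) fun s =>
      dotProduct_star_self_eq_zero.not.mpr (hz s)
  obtain ⟨s, -, hs⟩ := intermediate_value_Icc zero_le_one hcont.continuousOn
    (by simpa [hF0, hF1] using ht)
  rw [← hs, hF_real]
  exact div_star_dotProduct_self_mem_fov B (hz s)

lemma fov_smul_sub_smul_one [DecidableEq ι] (A : Matrix ι ι ℂ) (α β : ℂ) :
    fov (α • (A - β • 1)) = (fun w => α * (w - β)) '' fov A := by
  have key : ∀ x : ι → ℂ, star x ⬝ᵥ x = 1 →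
      star x ⬝ᵥ ((α • (A - β • 1)) *ᵥ x) = α * (star x ⬝ᵥ (A *ᵥ x) - β) := fun x hx => by
    rw [smul_mulVec, sub_mulVec, smul_mulVec, one_mulVec, dotProduct_smul, dotProduct_sub,
      dotProduct_smul, hx, smul_eq_mul, smul_eq_mul, mul_one]
  ext c
  constructor
  · rintro ⟨x, hx, rfl⟩
    exact ⟨_, ⟨x, hx, rfl⟩, (key x hx).symm⟩
  · rintro ⟨_, ⟨x, hx, rfl⟩, rfl⟩
    exact ⟨x, hx, (key x hx).symm⟩

theorem convex_fov (A : Matrix ι ι ℂ) : Convex ℝ (fov A) := by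
  classical
  intro a ha b hb ta tb hta htb htab
  rcases eq_or_ne a b with rfl | hab
  · rwa [← add_smul, htab, one_smul]
  have hB := fov_smul_sub_smul_one A (a - b)⁻¹ b
  have h0 : (0 : ℂ) ∈ fov ((a - b)⁻¹ • (A - b • 1)) := hB ▸ ⟨b, hb, by simp⟩
  have h1 : (1 : ℂ) ∈ fov ((a - b)⁻¹ • (A - b • 1)) :=
    hB ▸ ⟨a, ha, inv_mul_cancel₀ (sub_ne_zero.mpr hab)⟩
  obtain ⟨w, hw, hwt⟩ := hB ▸ ofReal_mem_fov_of_zero_mem_of_one_mem h0 h1 ⟨hta, by linarith⟩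
  convert hw using 1
  beta_reduce at hwt
  rw [inv_mul_eq_div, div_eq_iff (sub_ne_zero.mpr hab)] at hwt
  rw [Complex.real_smul, Complex.real_smul, eq_sub_of_add_eq' htab]
  push_cast
  linear_combination -hwt

open ComplexOrder in
lemma sum_star_dotProduct_mulVec_mem_fov {ρ : Type*} [Fintype ρ] (A : Matrix ι ι ℂ)
    (y : ρ → ι → ℂ) (hy : ∑ r, star (y r) ⬝ᵥ y r = 1) :
    ∑ r, star (y r) ⬝ᵥ (A *ᵥ y r) ∈ fov A := by
  classical
  set S := Finset.univ.filter fun r => y r ≠ 0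
  have hrestrict : ∀ f : (ι → ℂ) → ℂ, f 0 = 0 → ∑ r ∈ S, f (y r) = ∑ r, f (y r) := fun f hf =>
    Finset.sum_filter_of_ne fun r _ hr h => hr (by rw [h, hf])
  -- a convex combination of Rayleigh quotients, with weights `y rᴴ y r`
  have hw : ∀ r ∈ S, (star (y r) ⬝ᵥ y r).re • (star (y r) ⬝ᵥ (A *ᵥ y r) / star (y r) ⬝ᵥ y r)
      = star (y r) ⬝ᵥ (A *ᵥ y r) := fun r hr => by
    rw [Complex.real_smul, ofReal_re_star_dotProduct_self, mul_div_cancel₀]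
    exact dotProduct_star_self_eq_zero.not.mpr (Finset.mem_filter.mp hr).2
  rw [← hrestrict (fun v => star v ⬝ᵥ (A *ᵥ v)) (by simp), ← Finset.sum_congr rfl hw]
  refine (convex_fov A).sum_mem (fun r _ => ?_) ?_ fun r hr => ?_
  · exact (Complex.nonneg_iff.mp (dotProduct_star_self_nonneg _)).1
  · rw [← Complex.re_sum, hrestrict (fun v => star v ⬝ᵥ v) (by simp), hy, Complex.one_re]
  · exact div_star_dotProduct_self_mem_fov A (Finset.mem_filter.mp hr).2

end FieldOfValues

lemma kronSum_eq_sum_kronAt {d : ℕ} (N : Fin d → ℕ) (B : ∀ j, Matrix (Fin (N j)) (Fin (N j)) ℂ) :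
    kronSum N B = ∑ j, kronAt j (B j) :=
  rfl

/-- The field of values of a Kronecker sum is the Minkowski sum of
the fields of values: `𝕎(𝐀) = 𝕎(A₁) + ⋯ + 𝕎(A_d)`. -/
theorem stmt_17 {d : ℕ} (n : Fin d → ℕ)
    (A : ∀ i, Matrix (Fin (n i)) (Fin (n i)) ℂ) :
    fov (kronSum n A)
      = { c | ∃ s : Fin d → ℂ, (∀ i, s i ∈ fov (A i)) ∧ c = ∑ i, s i } := by
  ext c
  constructor
  · rintro ⟨x, hx, rfl⟩
    refine ⟨fun j => star x ⬝ᵥ (kronAt j (A j) *ᵥ x), fun j => ?_, ?_⟩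
    · dsimp only
      rw [star_dotProduct_kronAt_mulVec]
      exact sum_star_dotProduct_mulVec_mem_fov _ _
        ((star_dotProduct_self_eq_sum_slice j x).symm.trans hx)
    · rw [kronSum_eq_sum_kronAt, sum_mulVec, dotProduct_sum]
  · rintro ⟨s, hs, rfl⟩
    choose x hx hxs using hs
    refine ⟨kronVec x, by simp [star_kronVec_dotProduct_kronVec, hx], ?_⟩
    rw [kronSum_eq_sum_kronAt, sum_mulVec, dotProduct_sum]
    refine Finset.sum_congr rfl fun j _ => ?_
    rw [star_kronVec_dotProduct_kronAt_mulVec, hxs j]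
    simp [hx]
end
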